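/- arXiv:1806.07172 — 2 statements merged into one kernel-verified Lean document; each statement's English description precedes it below -/
import Mathlib

section
/- Let D be a directed mixed graph obtained from a graph G by adding, for some subset S of vertices of G, new 'transportability' vertices T_v (one per v ∈ S), each with a single outgoing edge T_v → v and no other incident edges. Let X, Y, Z be disjoint sets of vertices of G (containing no transportability vertices). Then for every subset T′ of the transportability vertices, X and Y are d-separated by Z ∪ T′ in D if and only if X and Y are d-separated by Z in G. -/
open Relation

/-- A semi-Markovian (directed mixed) graph: directed and bidirected edges. -/
structure MixedGraph (V : Type*) where
  dir : V → V → Prop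
  bidir : V → V → Prop

namespace MixedGraph

variable {V : Type*} (G : MixedGraph V)

/-- Adjacency: some edge (directed either way, or bidirected) joins `a` and `b`. -/
def adj (a b : V) : Prop := G.dir a b ∨ G.dir b a ∨ G.bidir a b ∨ G.bidir b a

/-- The edge between `a` and `m` points into `m`. -/
def into (a m : V) : Prop := G.dir a m ∨ G.bidir a m ∨ G.bidir m a

/-- Descendants of a set (including the set itself), via directed paths. -/
def desc (S : Set V) : Set V := {v | ∃ s ∈ S, ReflTransGen G.dir s v}

/-- `p` is a path from `x` to `y`: distinct vertices, consecutive ones adjacent. -/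
def isPathBetween (p : List V) (x y : V) : Prop :=
  p.Nodup ∧ p.Chain' G.adj ∧ p.head? = some x ∧ p.getLast? = some y

/-- `m` is a collider between `i` and `j`: both edges point into `m`. -/
def collider (i m j : V) : Prop := G.into i m ∧ G.into j m

/-- The path `p` is d-separated (blocked) by `Z`. -/
def blocked (Z : Set V) (p : List V) : Prop :=
  ∃ (l₁ l₂ : List V) (i m j : V), p = l₁ ++ i :: m :: j :: l₂ ∧
    ((¬ G.collider i m j ∧ m ∈ Z) ∨ (G.collider i m j ∧ G.desc {m} ∩ Z = ∅))

/-- `X` and `Y` are d-separated by `Z` in `G`. -/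
def dSep (X Y Z : Set V) : Prop :=
  ∀ x ∈ X, ∀ y ∈ Y, ∀ p : List V, G.isPathBetween p x y → G.blocked Z p

end MixedGraph

/-- The transportability diagram obtained from `G` by adding, for each `v ∈ S`, a new
transportability vertex with a single outgoing edge into `v` and no other incident edges. -/
def addTransport {V : Type*} (G : MixedGraph V) (S : Set V) : MixedGraph (V ⊕ S) where
  dir a b :=
    match a, b with
    | Sum.inl a, Sum.inl b => G.dir a b
    | Sum.inr t, Sum.inl v => (t : V) = v
    | _, _ => False
  bidir a b :=
    match a, b with
    | Sum.inl a, Sum.inl b => G.bidir a b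
    | _, _ => False

/-!
A transportability vertex `T_v` has the single neighbour `v`, so it is neither an endpoint of a
path between vertices of `G` nor an interior vertex of any path (both of its neighbours on the
path would be `v`). Hence these paths are exactly the paths of `G`. Along them the added edges
change neither colliders nor descendants, so such a path is blocked by `W` in the diagram iff it
is blocked in `G` by the vertices of `G` in `W`, and `T'` drops out.
-/

theorem List.exists_eq_map_inl {α β : Type*} {p : List (α ⊕ β)} (h : ∀ b, .inr b ∉ p) :
    ∃ q : List α, p = q.map .inl := by
  induction p with
  | nil => exact ⟨[], rfl⟩
  | cons a p ih =>
    obtain ⟨q, rfl⟩ := ih fun b hb => h b (List.mem_cons_of_mem a hb)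
    rcases a with a | b
    · exact ⟨a :: q, rfl⟩
    · exact (h b List.mem_cons_self).elim

namespace MixedGraph

variable {V : Type*} (G : MixedGraph V)

theorem adj_comm {a b : V} : G.adj a b ↔ G.adj b a := by
  unfold adj
  tauto

end MixedGraph

namespace addTransport

variable {V : Type*} {G : MixedGraph V} {S : Set V}

@[simp]
theorem collider_inl {i m j : V} :
    (addTransport G S).collider (.inl i) (.inl m) (.inl j) ↔ G.collider i m j :=
  Iff.rfl

theorem eq_inl_of_adj_inr {t : S} {u : V ⊕ S} (h : (addTransport G S).adj (.inr t) u) :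
    u = .inl (t : V) := by
  cases u <;> simp_all [MixedGraph.adj, addTransport]

theorem desc_singleton_inl (m : V) :
    (addTransport G S).desc {.inl m} = Sum.inl '' G.desc {m} := by
  ext u
  simp only [MixedGraph.desc, Set.mem_singleton_iff, exists_eq_left, Set.mem_image,
    Set.mem_ofPred_eq]
  constructor
  · intro h
    induction h with
    | refl => exact ⟨m, .refl, rfl⟩
    | @tail b c _ hbc ih =>
      obtain ⟨v, hv, rfl⟩ := ih
      rcases c with w | t
      · exact ⟨w, hv.tail hbc, rfl⟩
      · exact hbc.elim
  · rintro ⟨v, hv, rfl⟩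
    exact hv.lift Sum.inl fun _ _ h => h

theorem isPathBetween_map_inl_iff {q : List V} {x y : V} :
    (addTransport G S).isPathBetween (q.map .inl) (.inl x) (.inl y) ↔
      G.isPathBetween q x y :=
  and_congr (List.nodup_map_iff Sum.inl_injective) <| and_congr (List.isChain_map Sum.inl) <|
    and_congr (by simp) (by simp)

theorem inr_notMem_of_isPathBetween {p : List (V ⊕ S)} {x y : V}
    (hp : (addTransport G S).isPathBetween p (.inl x) (.inl y)) (t : S) : .inr t ∉ p := by
  obtain ⟨hnd, hch, hh, hl⟩ := hp
  intro ht
  obtain ⟨l₁, l₂, rfl⟩ := List.append_of_mem ht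
  obtain rfl | ⟨l₀, c, rfl⟩ := l₁.eq_nil_or_concat
  · simp at hh
  obtain _ | ⟨b, l₂⟩ := l₂
  · simp at hl
  rw [List.concat_eq_append, List.append_assoc, List.singleton_append] at hch hnd
  obtain ⟨-, hc, hb⟩ := List.isChain_append_cons_cons.mp hch
  rw [eq_inl_of_adj_inr ((MixedGraph.adj_comm _).mp hc),
    eq_inl_of_adj_inr (List.isChain_cons_cons.mp hb).1] at hnd
  simp [List.nodup_middle] at hnd

theorem blocked_map_inl_iff {W : Set (V ⊕ S)} {q : List V} :
    (addTransport G S).blocked W (q.map .inl) ↔ G.blocked (Sum.inl ⁻¹' W) q := by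
  have hdesc (m : V) :
      (addTransport G S).desc {.inl m} ∩ W = ∅ ↔ G.desc {m} ∩ Sum.inl ⁻¹' W = ∅ := by
    rw [desc_singleton_inl, ← Set.image_inter_preimage, Set.image_eq_empty]
  constructor
  · rintro ⟨l₁, l₂, i, m, j, hq, hblock⟩
    obtain ⟨q₁, r₁, rfl, rfl, h₁⟩ := List.map_eq_append_iff.mp hq
    obtain ⟨i, r₂, rfl, rfl, h₂⟩ := List.map_eq_cons_iff.mp h₁
    obtain ⟨m, r₃, rfl, rfl, h₃⟩ := List.map_eq_cons_iff.mp h₂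
    obtain ⟨j, q₂, rfl, rfl, rfl⟩ := List.map_eq_cons_iff.mp h₃
    refine ⟨q₁, q₂, i, m, j, rfl, ?_⟩
    rwa [collider_inl, hdesc] at hblock
  · rintro ⟨l₁, l₂, i, m, j, rfl, hblock⟩
    refine ⟨l₁.map .inl, l₂.map .inl, .inl i, .inl m, .inl j, by simp, ?_⟩
    rwa [collider_inl, hdesc]

theorem dSep_image_inl_iff {X Y : Set V} {W : Set (V ⊕ S)} :
    (addTransport G S).dSep (Sum.inl '' X) (Sum.inl '' Y) W ↔
      G.dSep X Y (Sum.inl ⁻¹' W) := by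
  simp only [MixedGraph.dSep, Set.forall_mem_image]
  refine forall₂_congr fun x _ => forall₂_congr fun y _ => ⟨fun h q hq => ?_, fun h p hp => ?_⟩
  · exact blocked_map_inl_iff.mp (h _ (isPathBetween_map_inl_iff.mpr hq))
  · obtain ⟨q, rfl⟩ := List.exists_eq_map_inl (inr_notMem_of_isPathBetween hp)
    exact blocked_map_inl_iff.mpr (h q (isPathBetween_map_inl_iff.mp hp))

end addTransport

theorem transport_dSep_iff_general {V : Type*} (G : MixedGraph V) (S : Set V)
    (X Y Z : Set V)
    (T' : Set (V ⊕ S)) (hT' : T' ⊆ Set.range (Sum.inr : S → V ⊕ S)) :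
    (addTransport G S).dSep (Sum.inl '' X) (Sum.inl '' Y) (Sum.inl '' Z ∪ T') ↔
      G.dSep X Y Z := by
  have hT'_left : Sum.inl ⁻¹' T' = ∅ :=
    Set.subset_empty_iff.mp ((Set.preimage_mono hT').trans_eq Set.preimage_inl_range_inr)
  rw [addTransport.dSep_image_inl_iff, Set.preimage_union,
    Set.preimage_image_eq _ Sum.inl_injective, hT'_left, Set.union_empty]

/-- For disjoint sets `X, Y, Z` of vertices of `G` and every subset `T'` of the
transportability vertices, `X` and `Y` are d-separated by `Z ∪ T'` in the transportability
diagram `D` iff `X` and `Y` are d-separated by `Z` in `G`. -/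
theorem transport_dSep_iff {V : Type*} (G : MixedGraph V) (S : Set V)
    (X Y Z : Set V) (hXY : Disjoint X Y) (hXZ : Disjoint X Z) (hYZ : Disjoint Y Z)
    (T' : Set (V ⊕ S)) (hT' : T' ⊆ Set.range (Sum.inr : S → V ⊕ S)) :
    (addTransport G S).dSep (Sum.inl '' X) (Sum.inl '' Y) (Sum.inl '' Z ∪ T') ↔
      G.dSep X Y Z :=
  transport_dSep_iff_general G S X Y Z T' hT'
end

section
/- Let G be a DAG and Z a set of vertices. If a vertex v is not a descendant of any vertex of Z in G, then the set of ancestors of v in G equals the set of ancestors of v in the mutilated graph G[Z-bar] intersected with the non-descendants of Z, and in particular An(v)_{G[Z-bar]} ⊇ An(v)_G ∩ (V \ De(Z)_G \ Z) and v ∉ De(Z)_{G[Z-bar]} \ {v}. -/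
open Relation

variable {V : Type*}

/-- `An(S)_G`: `S` together with all ancestors of vertices of `S` in the directed graph `G`. -/
def anc (G : V → V → Prop) (S : Set V) : Set V := {v | ∃ s ∈ S, ReflTransGen G v s}

/-- `De(S)_G`: `S` together with all descendants of vertices of `S` in `G`. -/
def des (G : V → V → Prop) (S : Set V) : Set V := {v | ∃ s ∈ S, ReflTransGen G s v}

/-- `G[Z-bar]`: the mutilated graph obtained from `G` by deleting all edges whose head is
in `Z`. -/
def mutilate (G : V → V → Prop) (Z : Set V) : V → V → Prop := fun a b => G a b ∧ b ∉ Z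

/-! A path into a non-descendant of `Z` never enters `Z`, so it survives the mutilation. -/

theorem mutilate_le (G : V → V → Prop) (Z : Set V) {a b : V} (h : mutilate G Z a b) : G a b :=
  h.1

section

variable {G : V → V → Prop} {Z : Set V} {u v : V}

theorem notMem_des_of_reflTransGen (huv : ReflTransGen G u v) (hv : v ∉ des G Z) :
    u ∉ des G Z :=
  fun ⟨s, hsZ, hsu⟩ => hv ⟨s, hsZ, hsu.trans huv⟩

theorem reflTransGen_mutilate_of_notMem_des (huv : ReflTransGen G u v) (hv : v ∉ des G Z) :
    ReflTransGen (mutilate G Z) u v := by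
  induction huv using ReflTransGen.head_induction_on with
  | refl => exact ReflTransGen.refl
  | head hac hcv ih => exact ReflTransGen.head ⟨hac, fun hcZ => hv ⟨_, hcZ, hcv⟩⟩ ih

theorem anc_singleton_eq_of_notMem_des (hv : v ∉ des G Z) :
    anc G {v} = anc (mutilate G Z) {v} ∩ {u | u ∉ des G Z} := by
  ext u
  constructor
  · rintro ⟨_, rfl, huv⟩
    exact ⟨⟨_, rfl, reflTransGen_mutilate_of_notMem_des huv hv⟩,
      notMem_des_of_reflTransGen huv hv⟩
  · rintro ⟨⟨_, rfl, huv⟩, -⟩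
    exact ⟨_, rfl, ReflTransGen.mono (fun _ _ => mutilate_le G Z) _ _ huv⟩

theorem des_mutilate_subset (G : V → V → Prop) (Z : Set V) :
    des (mutilate G Z) Z ⊆ des G Z :=
  fun _ ⟨s, hsZ, hsu⟩ => ⟨s, hsZ, ReflTransGen.mono (fun _ _ => mutilate_le G Z) _ _ hsu⟩

end

theorem anc_nondescendant_mutilate_general (G : V → V → Prop)
    (Z : Set V) (v : V)
    (hv : v ∉ des G Z) :
    anc G {v} = anc (mutilate G Z) {v} ∩ {u | u ∉ des G Z} ∧
    anc G {v} ∩ ((Set.univ \ des G Z) \ Z) ⊆ anc (mutilate G Z) {v} ∧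
    v ∉ des (mutilate G Z) Z \ {v} := by
  have hanc := anc_singleton_eq_of_notMem_des (Z := Z) hv
  refine ⟨hanc, ?_, ?_⟩
  · rw [hanc]
    exact fun u hu => hu.1.1
  · exact fun hmem => hv (des_mutilate_subset G Z hmem.1)

/-- In a DAG `G`, if `v` is not a descendant of any vertex of `Z`, then
the ancestors of `v` in `G` are exactly the ancestors of `v` in the mutilated graph
`G[Z-bar]` that are non-descendants of `Z`; in particular
`An(v)_{G[Z-bar]} ⊇ An(v)_G ∩ ((V \ De(Z)_G) \ Z)` and `v ∉ De(Z)_{G[Z-bar]} \ {v}`. -/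
theorem anc_nondescendant_mutilate (G : V → V → Prop)
    (hacyc : ∀ v, ¬ TransGen G v v) (Z : Set V) (v : V)
    (hv : v ∉ des G Z) :
    anc G {v} = anc (mutilate G Z) {v} ∩ {u | u ∉ des G Z} ∧
    anc G {v} ∩ ((Set.univ \ des G Z) \ Z) ⊆ anc (mutilate G Z) {v} ∧
    v ∉ des (mutilate G Z) Z \ {v} :=
  anc_nondescendant_mutilate_general G Z v hv
end
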